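/- arXiv:0903.0907 — 2 statements merged into one kernel-verified Lean document; each statement's English description precedes it below -/
import Mathlib

section
/- Let g : ℝᴺ → ℝᵈ be strictly differentiable at a point q with g(q) = 0, and suppose the derivative Dg(q) : ℝᴺ → ℝᵈ is surjective. Then the tangent cone at q of the level set g⁻¹({0}) equals the kernel of Dg(q); that is, tangentConeAt ℝ (g⁻¹{0}) q = {w ∈ ℝᴺ : Dg(q)(w) = 0}. -/
/-!
The derivative maps the tangent cone of a level set into the tangent cone of a single point,
which is `{0}`. Conversely, the implicit function theorem parametrizes the level set near `a` by a
neighbourhood of `0` in `ker f'`, through a map whose derivative at `0` is the inclusion; this map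
carries the full tangent cone of that neighbourhood onto `ker f'`.
-/

open Filter Set Topology

variable {𝕜 : Type*} [NontriviallyNormedField 𝕜]
  {E : Type*} [NormedAddCommGroup E] [NormedSpace 𝕜 E]
  {F : Type*} [NormedAddCommGroup F] [NormedSpace 𝕜 F]
  {f : E → F} {f' : E →L[𝕜] F} {a : E}

theorem HasFDerivAt.tangentConeAt_preimage_singleton_subset_ker (hf : HasFDerivAt f f' a) :
    tangentConeAt 𝕜 (f ⁻¹' {f a}) a ⊆ f'.ker := fun _ hv ↦
  have hfv := hf.hasFDerivWithinAt.mapsTo_tangent_cone hv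
  tangentConeAt_subset_zero
    (fun h ↦ (finite_singleton (f a)).not_infinite (Set.Infinite.of_accPt h))
    (tangentConeAt_mono (image_preimage_subset f {f a}) hfv)

theorem HasStrictFDerivAt.ker_subset_tangentConeAt_preimage_singleton [CompleteSpace E]
    [CompleteSpace F] (hf : HasStrictFDerivAt f f' a) (hf' : f'.range = ⊤)
    (hker : f'.ker.ClosedComplemented) :
    (f'.ker : Set E) ⊆ tangentConeAt 𝕜 (f ⁻¹' {f a}) a := by
  intro v hv
  set ψ := hf.implicitFunctionOfComplemented f f' hf' hker (f a)
  set S : Set f'.ker := {z | f (ψ z) = f a}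
  have hS : S ∈ 𝓝 0 := (tendsto_const_nhds.prodMk_nhds tendsto_id).eventually
    (hf.map_implicitFunctionOfComplemented_eq hf' hker)
  have hψ : HasFDerivWithinAt ψ f'.ker.subtypeL S 0 :=
    (hf.to_implicitFunctionOfComplemented hf' hker).hasFDerivAt.hasFDerivWithinAt
  have hψ0 : ψ 0 = a := hf.implicitFunctionOfComplemented_apply_image hf' hker
  have hv' : (⟨v, hv⟩ : f'.ker) ∈ tangentConeAt 𝕜 S 0 := by
    rw [tangentConeAt_of_mem_nhds hS]
    exact mem_univ _
  have hmem := hψ.mapsTo_tangent_cone hv'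
  rw [hψ0] at hmem
  exact tangentConeAt_mono (image_subset_iff.2 fun _ hz ↦ hz) hmem

theorem HasStrictFDerivAt.tangentConeAt_preimage_singleton_eq_ker [CompleteSpace E]
    [CompleteSpace F] (hf : HasStrictFDerivAt f f' a) (hf' : f'.range = ⊤)
    (hker : f'.ker.ClosedComplemented) :
    tangentConeAt 𝕜 (f ⁻¹' {f a}) a = f'.ker :=
  (hf.hasFDerivAt.tangentConeAt_preimage_singleton_subset_ker).antisymm
    (hf.ker_subset_tangentConeAt_preimage_singleton hf' hker)

theorem stmt_5 (N d : ℕ)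
    (g : EuclideanSpace ℝ (Fin N) → EuclideanSpace ℝ (Fin d))
    (q : EuclideanSpace ℝ (Fin N))
    (hg : HasStrictFDerivAt g (fderiv ℝ g q) q)
    (hq : g q = 0)
    (hsurj : Function.Surjective (fderiv ℝ g q)) :
    tangentConeAt ℝ (g ⁻¹' {0}) q = {w | fderiv ℝ g q w = 0} := by
  have hrange : (fderiv ℝ g q).range = ⊤ := LinearMap.range_eq_top.2 hsurj
  have h := hg.tangentConeAt_preimage_singleton_eq_ker hrange
    (fderiv ℝ g q).ker_closedComplemented_of_finiteDimensional_range
  rw [hq] at h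
  exact h
end

section
/- Let g : ℝᴺ → ℝᵈ be twice continuously differentiable, let q₀ ∈ ℝᴺ satisfy g(q₀) = 0, and suppose Dg(q₀) : ℝᴺ → ℝᵈ is surjective. Define F : ℝᴺ × ℝᵈ → ℝᴺ × ℝᵈ by F(q, θ) = (q + (Dg(q))*(θ), g(q)). Then F has a strict Fréchet derivative at (q₀, 0) given by (δq, δθ) ↦ (δq + (Dg(q₀))*(δθ), Dg(q₀)(δq)), this derivative is a linear isomorphism of ℝᴺ × ℝᵈ, and consequently F is a local homeomorphism at (q₀, 0): there are open neighbourhoods U of (q₀, 0) and V of (q₀, 0) such that F restricts to a bijection from U onto V. -/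
/-!
Linearising `F(q, θ) = (q + Dg(q)* θ, g q)` at `(q₀, 0)` gives the saddle-point operator
`(δq, δθ) ↦ (δq + A* δθ, A δq)` with `A = Dg(q₀)`; the second-derivative term `D(Dg(·)*)(q₀) δq`
is applied to `θ = 0` and drops out. If `A δq = 0` and `δq + A* δθ = 0`, pairing the latter with
`δq` gives `‖δq‖² = ⟪A δq, δθ⟫ = 0`, and then `A* δθ = 0` forces `δθ = 0` because `A` is
surjective. An injective endomorphism of a finite-dimensional space is invertible, so the inverse
function theorem applies.
-/

open ContinuousLinearMap

namespace ContinuousLinearMap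

section SaddlePoint

variable {𝕜 E F : Type*} [RCLike 𝕜]
  [NormedAddCommGroup E] [InnerProductSpace 𝕜 E] [CompleteSpace E]
  [NormedAddCommGroup F] [InnerProductSpace 𝕜 F] [CompleteSpace F]

theorem injective_adjoint_of_surjective {A : E →L[𝕜] F} (hA : Function.Surjective A) :
    Function.Injective (adjoint A) := by
  rw [← coe_coe, ← LinearMap.ker_eq_bot, ← orthogonal_range, LinearMap.range_eq_top.mpr hA,
    Submodule.top_orthogonal_eq_bot]

/-- The block operator `[[1, A*], [A, 0]]` on `E × F`. -/
noncomputable def saddlePointMap (A : E →L[𝕜] F) : E × F →L[𝕜] E × F :=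
  (fst 𝕜 E F + (adjoint A).comp (snd 𝕜 E F)).prod (A.comp (fst 𝕜 E F))

@[simp]
theorem saddlePointMap_apply (A : E →L[𝕜] F) (δ : E × F) :
    saddlePointMap A δ = (δ.1 + adjoint A δ.2, A δ.1) :=
  rfl

theorem saddlePointMap_injective {A : E →L[𝕜] F} (hA : Function.Surjective A) :
    Function.Injective (saddlePointMap A) := by
  rw [injective_iff_map_eq_zero]
  rintro ⟨x, θ⟩ h
  simp only [saddlePointMap_apply, Prod.mk_eq_zero] at h
  obtain ⟨hfst, hker⟩ := h
  have hx : x = 0 := by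
    have : inner 𝕜 x (x + adjoint A θ) = 0 := by rw [hfst, inner_zero_right]
    rwa [inner_add_right, adjoint_inner_right, hker, inner_zero_left, add_zero,
      inner_self_eq_zero] at this
  subst hx
  rw [zero_add] at hfst
  exact Prod.ext rfl (((injective_adjoint_of_surjective hA).eq_iff' (map_zero _)).mp hfst)

variable [FiniteDimensional 𝕜 E] [FiniteDimensional 𝕜 F]

noncomputable def saddlePointEquiv {A : E →L[𝕜] F} (hA : Function.Surjective A) :
    (E × F) ≃L[𝕜] (E × F) :=
  (LinearEquiv.ofInjectiveEndo _ (saddlePointMap_injective hA)).toContinuousLinearEquiv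

end SaddlePoint

end ContinuousLinearMap

section Calculus

variable {𝕜 E F G : Type*} [NontriviallyNormedField 𝕜]
  [NormedAddCommGroup E] [NormedSpace 𝕜 E] [NormedAddCommGroup F] [NormedSpace 𝕜 F]
  [NormedAddCommGroup G] [NormedSpace 𝕜 G]

theorem HasStrictFDerivAt.clm_apply_snd_at_zero {B : E → F →L[𝕜] G} {B' : E →L[𝕜] F →L[𝕜] G}
    {q₀ : E} (hB : HasStrictFDerivAt B B' q₀) :
    HasStrictFDerivAt (fun p : E × F => B p.1 p.2) ((B q₀).comp (snd 𝕜 E F)) (q₀, 0) := by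
  have hfst : HasStrictFDerivAt (fun p : E × F => B p.1) (B'.comp (fst 𝕜 E F)) (q₀, 0) :=
    hB.comp (q₀, 0) hasStrictFDerivAt_fst
  simpa using hfst.clm_apply hasStrictFDerivAt_snd

theorem HasStrictFDerivAt.exists_isOpen_bijOn [CompleteSpace E] {f : E → F} {f' : E ≃L[𝕜] F}
    {a : E} (hf : HasStrictFDerivAt f (f' : E →L[𝕜] F) a) :
    ∃ (U : Set E) (V : Set F), IsOpen U ∧ IsOpen V ∧ a ∈ U ∧ f a ∈ V ∧ Set.BijOn f U V := by
  let e := hf.toOpenPartialHomeomorph f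
  refine ⟨e.source, e.target, e.open_source, e.open_target, hf.mem_toOpenPartialHomeomorph_source,
    hf.image_mem_toOpenPartialHomeomorph_target, ?_⟩
  simpa [e, hf.toOpenPartialHomeomorph_coe] using e.bijOn

end Calculus

section Lagrange

variable {E F : Type*}
  [NormedAddCommGroup E] [InnerProductSpace ℝ E] [CompleteSpace E]
  [NormedAddCommGroup F] [InnerProductSpace ℝ F] [CompleteSpace F]

/-- The map `F` of the paper: `lagrangeMap g (q, θ) = (q̂, 0)` says `q = ℙ(q̂)`, with Lagrange
multiplier `θ`. -/
noncomputable def lagrangeMap (g : E → F) (p : E × F) : E × F :=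
  (p.1 + adjoint (fderiv ℝ g p.1) p.2, g p.1)

theorem hasStrictFDerivAt_lagrangeMap {g : E → F} {q₀ : E} (hg : ContDiffAt ℝ 2 g q₀) :
    HasStrictFDerivAt (lagrangeMap g) (saddlePointMap (fderiv ℝ g q₀)) (q₀, 0) := by
  have hDg : ContDiffAt ℝ 1 (fun q => adjoint (fderiv ℝ g q)) q₀ :=
    (adjoint (𝕜 := ℝ) (E := E) (F := F)).toContinuousLinearEquiv.contDiff.contDiffAt.comp q₀
      (hg.fderiv_right (by norm_num))
  have hfst := hasStrictFDerivAt_fst.add (hDg.hasStrictFDerivAt one_ne_zero).clm_apply_snd_at_zero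
  have hsnd : HasStrictFDerivAt (fun p : E × F => g p.1) ((fderiv ℝ g q₀).comp (fst ℝ E F))
      (q₀, 0) :=
    (hg.hasStrictFDerivAt two_ne_zero).comp (q₀, 0) hasStrictFDerivAt_fst
  exact hfst.prodMk hsnd

end Lagrange

theorem stmt_8 (N d : ℕ)
    (g : EuclideanSpace ℝ (Fin N) → EuclideanSpace ℝ (Fin d))
    (hg : ContDiff ℝ 2 g)
    (q₀ : EuclideanSpace ℝ (Fin N))
    (hq₀ : g q₀ = 0)
    (hsurj : Function.Surjective (fderiv ℝ g q₀))
    (F : EuclideanSpace ℝ (Fin N) × EuclideanSpace ℝ (Fin d) →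
      EuclideanSpace ℝ (Fin N) × EuclideanSpace ℝ (Fin d))
    (hF : ∀ (q : EuclideanSpace ℝ (Fin N)) (θ : EuclideanSpace ℝ (Fin d)),
      F (q, θ) = (q + ContinuousLinearMap.adjoint (fderiv ℝ g q) θ, g q)) :
    ∃ L : (EuclideanSpace ℝ (Fin N) × EuclideanSpace ℝ (Fin d)) ≃L[ℝ]
        (EuclideanSpace ℝ (Fin N) × EuclideanSpace ℝ (Fin d)),
      (∀ δ : EuclideanSpace ℝ (Fin N) × EuclideanSpace ℝ (Fin d),
        L δ = (δ.1 + ContinuousLinearMap.adjoint (fderiv ℝ g q₀) δ.2,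
          fderiv ℝ g q₀ δ.1)) ∧
      HasStrictFDerivAt F (L : _ →L[ℝ] _) (q₀, 0) ∧
      ∃ U V : Set (EuclideanSpace ℝ (Fin N) × EuclideanSpace ℝ (Fin d)),
        IsOpen U ∧ IsOpen V ∧ (q₀, 0) ∈ U ∧ (q₀, 0) ∈ V ∧ Set.BijOn F U V := by
  have hF_eq : F = lagrangeMap g := funext fun p => hF p.1 p.2
  subst hF_eq
  have hderiv : HasStrictFDerivAt (lagrangeMap g)
      (saddlePointEquiv hsurj : _ →L[ℝ] _) (q₀, 0) :=
    hasStrictFDerivAt_lagrangeMap hg.contDiffAt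
  have hfixed : lagrangeMap g (q₀, 0) = (q₀, 0) := by simp [lagrangeMap, hq₀]
  refine ⟨saddlePointEquiv hsurj, fun δ => rfl, hderiv, ?_⟩
  simpa only [hfixed] using hderiv.exists_isOpen_bijOn
end
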